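/- arXiv:2001.12005 — 2 statements merged into one kernel-verified Lean document; each statement's English description precedes it below -/
import Mathlib

section
/- Suppose $T \subseteq \omega_1$ is stationary and there exists a ladder system $\bar{\eta}$ on $S^2_1$ indexed by $T$ (i.e., $\eta_\delta = \nu_\delta[T]$ for some club ladder system $\bar{\nu}$) such that $\mathrm{Unif}_2(\bar{\eta})$ holds. Then $\mathrm{Refl}_T(S^2_0)$ fails: there is a stationary $S \subseteq S^2_0$ and a club ladder system $\bar{\nu}'$ such that for every $\delta \in S^2_1$, $S \cap \nu'_\delta[T]$ is non-stationary in $\delta$. -/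
open Set

noncomputable section

/-- The second uncountable cardinal, as an ordinal. -/
def omega2 : Ordinal.{0} := (Cardinal.aleph 2).ord

/-- The first uncountable cardinal, as an ordinal. -/
def omega1 : Ordinal.{0} := (Cardinal.aleph 1).ord

/-- `S²₁ = {α < ω₂ : cf α = ω₁}`. -/
def S21 : Set Ordinal := {α | α < omega2 ∧ Ordinal.cof α = Cardinal.aleph 1}

/-- `S²₀ = {α < ω₂ : cf α = ω}`. -/
def S20 : Set Ordinal := {α | α < omega2 ∧ Ordinal.cof α = Cardinal.aleph 0}

/-- `A` is an unbounded subset of `δ`. -/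
def unboundedIn (A : Set Ordinal) (δ : Ordinal) : Prop :=
  A ⊆ Iio δ ∧ ∀ β < δ, ∃ γ ∈ A, β ≤ γ

/-- `A` is closed in `δ`: every nonzero `β < δ` which is a limit of points of `A` lies in `A`. -/
def closedIn (A : Set Ordinal) (δ : Ordinal) : Prop :=
  ∀ β < δ, β ≠ 0 → (∀ γ < β, ∃ ξ ∈ A, γ < ξ ∧ ξ < β) → β ∈ A

/-- `C` is a club (closed unbounded) subset of `δ`. -/
def clubIn (C : Set Ordinal) (δ : Ordinal) : Prop :=
  closedIn C δ ∧ unboundedIn C δ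

/-- `S` is stationary in `δ`: it meets every club subset of `δ`. -/
def stationaryIn (S : Set Ordinal) (δ : Ordinal) : Prop :=
  ∀ C : Set Ordinal, clubIn C δ → (S ∩ C).Nonempty

/-- `e` is (the increasing enumeration of) a ladder system on `S²₁`: for each `δ ∈ S²₁`,
`e δ` enumerates, strictly increasingly along `ω₁`, an unbounded subset of `δ`
of order type `ω₁`. -/
def IsLadderEnum (e : Ordinal → Ordinal → Ordinal) : Prop :=
  ∀ δ ∈ S21, StrictMonoOn (e δ) (Iio omega1) ∧
    (∀ i < omega1, e δ i < δ) ∧ (∀ β < δ, ∃ i < omega1, β ≤ e δ i)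

/-- A club ladder system: additionally each enumeration is continuous, so each ladder is
a club subset of `δ` of order type `ω₁`. -/
def IsClubLadderEnum (e : Ordinal → Ordinal → Ordinal) : Prop :=
  IsLadderEnum e ∧
    ∀ δ ∈ S21, ∀ i < omega1, Order.IsSuccLimit i → e δ i = sSup (e δ '' Iio i)

/-- The ladder at `δ` indexed by `T ⊆ ω₁`: the image `ν_δ[T]` of `T` under the
increasing enumeration. Taking `T = Iio omega1` gives the full ladder. -/
def lad (e : Ordinal → Ordinal → Ordinal) (T : Set Ordinal) (δ : Ordinal) : Set Ordinal :=
  e δ '' (T ∩ Iio omega1)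

/-- `h` uniformizes the ladder coloring `c` on the ladder system `e ↾ T`:
for each `δ ∈ S²₁`, `h` agrees with `c δ` on a tail of the ladder at `δ`. -/
def Uniformizes {Λ : Type*} (e : Ordinal → Ordinal → Ordinal) (T : Set Ordinal)
    (c : Ordinal → Ordinal → Λ) (h : Ordinal → Λ) : Prop :=
  ∀ δ ∈ S21, ∃ γ < δ, ∀ β ∈ lad e T δ, γ ≤ β → h β = c δ β

/-- The `Λ`-uniformization property for the ladder system `e ↾ T`. -/
def Unif (e : Ordinal → Ordinal → Ordinal) (T : Set Ordinal) (Λ : Type*) : Prop :=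
  ∀ c : Ordinal → Ordinal → Λ, ∃ h : Ordinal → Λ, Uniformizes e T c h

/-- `A` is a `◇(S)`-sequence (for `S ⊆ κ`): it guesses every `X` stationarily often in `κ`. -/
def DiamondSeq (S : Set Ordinal) (κ : Ordinal) (A : Ordinal → Set Ordinal) : Prop :=
  (∀ α ∈ S, A α ⊆ Iio α) ∧
    ∀ X : Set Ordinal, stationaryIn {α | α ∈ S ∧ X ∩ Iio α = A α} κ

/-- The diamond principle `◇(S)` for `S ⊆ κ`. -/
def DiamondP (S : Set Ordinal) (κ : Ordinal) : Prop :=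
  ∃ A : Ordinal → Set Ordinal, DiamondSeq S κ A

/-- Reflection with pattern `T`: for every club ladder system and every stationary
`S ⊆ S²₀` there is `δ ∈ S²₁` with `S ∩ ν_δ[T]` stationary in `δ`. -/
def ReflPattern (T : Set Ordinal) : Prop :=
  ∀ e : Ordinal → Ordinal → Ordinal, IsClubLadderEnum e →
    ∀ S : Set Ordinal, S ⊆ S20 → stationaryIn S omega2 →
      ∃ δ ∈ S21, stationaryIn (S ∩ lad e T δ) δ

/-- `NS_{ω₁} ↾ T` is saturated: every family of stationary subsets of `T` with pairwise
nonstationary intersections has size at most `ℵ₁`. -/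
def SaturatedOn (T : Set Ordinal) : Prop :=
  ∀ A : Set (Set Ordinal), (∀ S ∈ A, S ⊆ T ∧ stationaryIn S omega1) →
    (∀ S ∈ A, ∀ S' ∈ A, S ≠ S' → ¬ stationaryIn (S ∩ S') omega1) →
    Cardinal.mk ↥A ≤ Cardinal.aleph 1

section AuxNonrefl

open Ordinal Cardinal in
lemma omega1_pos' : (0 : Ordinal) < omega1 := by
  rw [omega1, Cardinal.lt_ord]
  simpa using Cardinal.aleph_pos 1

open Ordinal Cardinal in
lemma omega2_cof' : omega2.cof = Cardinal.aleph 2 := by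
  have h : (Cardinal.aleph 2).IsRegular := by
    rw [show (2 : Ordinal) = Order.succ 1 from Ordinal.succ_one.symm]
    exact Cardinal.isRegular_aleph_succ 1
  exact h.cof_eq

open Ordinal Cardinal in
lemma aleph0_lt_cof_omega2 : Cardinal.aleph0 < omega2.cof := by
  rw [omega2_cof']
  exact Cardinal.aleph0_lt_aleph_one.trans
    (Cardinal.aleph_lt_aleph.2 (by norm_num))

open Ordinal Cardinal in
lemma isLimit_omega2' : Order.IsSuccLimit omega2 :=
  Ordinal.aleph0_le_cof.mp (by rw [omega2_cof']; exact Cardinal.aleph0_le_aleph 2)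

open Ordinal Cardinal in
lemma S21_isLimit {δ : Ordinal} (h : δ ∈ S21) : Order.IsSuccLimit δ :=
  Ordinal.aleph0_le_cof.mp (by rw [h.2]; exact Cardinal.aleph0_le_aleph 1)

lemma clubIn_Ico' {δ γ : Ordinal} (hδ : Order.IsSuccLimit δ) (hγ : γ < δ) :
    clubIn {x | γ ≤ x ∧ x < δ} δ := by
  refine ⟨?_, ?_, ?_⟩
  · intro β hβ hβ0 hlim
    obtain ⟨ξ, hξ, _, hξβ⟩ := hlim 0 (pos_iff_ne_zero.2 hβ0)
    exact ⟨hξ.1.trans hξβ.le, hβ⟩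
  · intro x hx; exact hx.2
  · intro β hβ; exact ⟨max γ β, ⟨le_max_left _ _, max_lt hγ hβ⟩, le_max_right _ _⟩

lemma not_stationary_of_bounded {B : Set Ordinal} {δ γ : Ordinal}
    (hδ : Order.IsSuccLimit δ) (hγ : γ < δ) (hB : ∀ β ∈ B, β < γ) :
    ¬ stationaryIn B δ := by
  intro hs
  obtain ⟨β, hβB, hβC⟩ := hs _ (clubIn_Ico' hδ hγ)
  exact absurd (hB β hβB) (not_lt.2 hβC.1)

/-- Iteration of a "next element" function. -/
def iterSeq (F : Ordinal → Ordinal) (β : Ordinal) : ℕ → Ordinal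
  | 0 => β
  | n + 1 => F (iterSeq F β n)

lemma iterSeq_lt {δ : Ordinal} {F : Ordinal → Ordinal}
    (hF : ∀ x < δ, x < F x ∧ F x < δ) {β : Ordinal} (hβ : β < δ) :
    ∀ n, iterSeq F β n < δ := by
  intro n
  induction n with
  | zero => exact hβ
  | succ n ih => exact (hF _ ih).2

lemma iterSeq_step {δ : Ordinal} {F : Ordinal → Ordinal}
    (hF : ∀ x < δ, x < F x ∧ F x < δ) {β : Ordinal} (hβ : β < δ) :
    ∀ n, iterSeq F β n < iterSeq F β (n + 1) :=
  fun n => (hF _ (iterSeq_lt hF hβ n)).1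

open Ordinal Cardinal in
lemma iterSeq_isup_lt {δ : Ordinal.{0}} (hδ : Cardinal.aleph0 < δ.cof)
    {F : Ordinal → Ordinal} (hF : ∀ x < δ, x < F x ∧ F x < δ)
    {β : Ordinal} (hβ : β < δ) : (⨆ n, iterSeq F β n) < δ := by
  apply Ordinal.iSup_lt_ord _ (iterSeq_lt hF hβ)
  rwa [Cardinal.mk_nat]

open Ordinal Cardinal in
lemma iterSeq_lt_isup {δ : Ordinal.{0}} {F : Ordinal → Ordinal}
    (hF : ∀ x < δ, x < F x ∧ F x < δ) {β : Ordinal} (hβ : β < δ) (n : ℕ) :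
    iterSeq F β n < ⨆ n, iterSeq F β n :=
  lt_of_lt_of_le (iterSeq_step hF hβ n) (Ordinal.le_iSup (fun n => iterSeq F β n) (n + 1))

open Ordinal Cardinal in
lemma stationary_S20 : stationaryIn S20 omega2 := by
  classical
  intro C hC
  have hnext : ∀ x < omega2, ∃ γ ∈ C, x + 1 ≤ γ := fun x hx =>
    hC.2.2 (x + 1) (by rw [Ordinal.add_one_eq_succ]; exact isLimit_omega2'.succ_lt hx)
  set F : Ordinal → Ordinal := fun x => if h : x < omega2 then (hnext x h).choose else 0
    with hFdef
  have hFspec : ∀ x, ∀ _ : x < omega2, F x ∈ C ∧ x + 1 ≤ F x := by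
    intro x h
    simp only [hFdef, dif_pos h]
    exact ⟨(hnext x h).choose_spec.1, (hnext x h).choose_spec.2⟩
  have hF : ∀ x < omega2, x < F x ∧ F x < omega2 := by
    intro x h
    refine ⟨lt_of_lt_of_le ?_ (hFspec x h).2, hC.2.1 (hFspec x h).1⟩
    rw [Ordinal.add_one_eq_succ]; exact Order.lt_succ x
  have h0 : (0 : Ordinal) < omega2 := isLimit_omega2'.pos
  set g : ℕ → Ordinal := iterSeq F 0 with hgdef
  set lam : Ordinal := ⨆ n, g n with hlamdef
  have hglt : ∀ n, g n < lam := iterSeq_lt_isup hF h0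
  have hlam : lam < omega2 := iterSeq_isup_lt aleph0_lt_cof_omega2 hF h0
  have hlam0 : lam ≠ 0 := by
    have := hglt 0
    exact (pos_iff_ne_zero.1 (lt_of_le_of_lt zero_le' this))
  have hlamC : lam ∈ C := by
    apply hC.1 lam hlam hlam0
    intro γ hγ
    obtain ⟨n, hn⟩ := Ordinal.lt_iSup_iff.1 hγ
    refine ⟨g (n + 1), (hFspec (g n) (iterSeq_lt hF h0 n)).1, ?_, hglt (n + 1)⟩
    exact hn.trans (iterSeq_step hF h0 n)
  have hmono : StrictMono g := strictMono_nat_of_lt_succ (iterSeq_step hF h0)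
  have hcof : lam.cof = Cardinal.aleph 0 := by
    rw [Cardinal.aleph_zero]
    apply le_antisymm
    · have := Ordinal.cof_iSup_le (f := g) hglt
      rwa [Cardinal.mk_nat] at this
    · apply Ordinal.aleph0_le_cof.2
      rw [Ordinal.isSuccLimit_iff]
      refine ⟨hlam0, fun a ha => ?_⟩
      obtain ⟨n, hn⟩ := Ordinal.lt_iSup_iff.1 ha.lt
      exact ha.2 hn (hglt n)
  exact ⟨lam, ⟨hlam, hcof⟩, hlamC⟩

open Ordinal Cardinal in
lemma clubIn_iInter' {C : omega1.ToType → Set Ordinal}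
    (hC : ∀ i, clubIn (C i) omega2) : clubIn (⋂ i, C i) omega2 := by
  classical
  have hne : Nonempty omega1.ToType :=
    Ordinal.toType_nonempty_iff_ne_zero.2 (ne_of_gt omega1_pos')
  refine ⟨?_, ?_, ?_⟩
  · intro β hβ hβ0 hlim
    refine Set.mem_iInter.2 fun i => (hC i).1 β hβ hβ0 fun γ hγ => ?_
    obtain ⟨ξ, hξ, h1, h2⟩ := hlim γ hγ
    exact ⟨ξ, Set.mem_iInter.1 hξ i, h1, h2⟩
  · intro x hx
    exact (hC (Classical.arbitrary _)).2.1 (Set.mem_iInter.1 hx _)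
  · intro β hβ
    have hnext : ∀ (i : omega1.ToType) (x : Ordinal), x < omega2 → ∃ γ ∈ C i, x + 1 ≤ γ :=
      fun i x hx => (hC i).2.2 (x + 1)
        (by rw [Ordinal.add_one_eq_succ]; exact isLimit_omega2'.succ_lt hx)
    set pick : omega1.ToType → Ordinal → Ordinal := fun i x =>
      if h : x < omega2 then (hnext i x h).choose else 0 with hpickdef
    have hpickspec : ∀ i x, ∀ _ : x < omega2, pick i x ∈ C i ∧ x + 1 ≤ pick i x := by
      intro i x h
      simp only [hpickdef, dif_pos h]
      exact ⟨(hnext i x h).choose_spec.1, (hnext i x h).choose_spec.2⟩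
    set F : Ordinal → Ordinal := fun x => max (x + 1) (⨆ i, pick i x) with hFdef
    have hF : ∀ x < omega2, x < F x ∧ F x < omega2 := by
      intro x h
      constructor
      · refine lt_of_lt_of_le ?_ (le_max_left _ _)
        rw [Ordinal.add_one_eq_succ]; exact Order.lt_succ x
      · apply max_lt
        · rw [Ordinal.add_one_eq_succ]; exact isLimit_omega2'.succ_lt h
        · apply Ordinal.iSup_lt_ord_lift _ (fun i => (hC i).2.1 (hpickspec i x h).1)
          rw [Cardinal.mk_toType, omega1, Cardinal.card_ord, Cardinal.lift_id, omega2_cof']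
          exact Cardinal.aleph_lt_aleph.2 (by norm_num)
    set g : ℕ → Ordinal := iterSeq F β with hgdef
    set lam : Ordinal := ⨆ n, g n with hlamdef
    have hglt : ∀ n, g n < lam := iterSeq_lt_isup hF hβ
    have hgδ : ∀ n, g n < omega2 := iterSeq_lt hF hβ
    have hlam : lam < omega2 := iterSeq_isup_lt aleph0_lt_cof_omega2 hF hβ
    have hlam0 : lam ≠ 0 :=
      pos_iff_ne_zero.1 (lt_of_le_of_lt zero_le' (hglt 0))
    refine ⟨lam, Set.mem_iInter.2 fun i => ?_, le_of_lt (hglt 0)⟩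
    apply (hC i).1 lam hlam hlam0
    intro γ hγ
    obtain ⟨n, hn⟩ := Ordinal.lt_iSup_iff.1 hγ
    refine ⟨pick i (g n), (hpickspec i (g n) (hgδ n)).1, ?_, ?_⟩
    · calc γ < g n := hn
        _ < g n + 1 := by rw [Ordinal.add_one_eq_succ]; exact Order.lt_succ _
        _ ≤ pick i (g n) := (hpickspec i (g n) (hgδ n)).2
    · calc pick i (g n) ≤ ⨆ j, pick j (g n) := Ordinal.le_iSup _ i
        _ ≤ F (g n) := le_max_right _ _
        _ = g (n + 1) := rfl
        _ < lam := hglt (n + 1)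

end AuxNonrefl

/-- If `T ⊆ ω₁` is stationary and some ladder system indexed by `T`
(i.e. of the form `ν̄ ↾ T` for a club ladder system `ν̄`) satisfies `Unif₂`, then
`Refl_T(S²₀)` fails: there is a stationary `S ⊆ S²₀` and a club ladder system `ν̄'`
such that `S ∩ ν'_δ[T]` is nonstationary in `δ` for every `δ ∈ S²₁`. -/
theorem unif2_on_stationary_index_implies_nonrefl
    (T : Set Ordinal) (hT : T ⊆ Iio omega1) (hTstat : stationaryIn T omega1)
    (e : Ordinal → Ordinal → Ordinal) (he : IsClubLadderEnum e)
    (hu : Unif e T Bool) :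
    ∃ S : Set Ordinal, S ⊆ S20 ∧ stationaryIn S omega2 ∧
      ∃ e' : Ordinal → Ordinal → Ordinal, IsClubLadderEnum e' ∧
        ∀ δ ∈ S21, ¬ stationaryIn (S ∩ lad e' T δ) δ := by
  classical
  -- the injective coloring `c δ` on each ladder: the index of `β` in the ladder
  set c : Ordinal → Ordinal → Ordinal := fun δ β =>
    if h : ∃ i, (i ∈ T ∩ Iio omega1) ∧ e δ i = β then h.choose else 0 with hcdef
  have hc : ∀ δ β, β ∈ lad e T δ → c δ β < omega1 ∧ e δ (c δ β) = β := by
    intro δ β hβ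
    have hex : ∃ i, (i ∈ T ∩ Iio omega1) ∧ e δ i = β := by
      obtain ⟨i, hi, hei⟩ := hβ; exact ⟨i, hi, hei⟩
    have hval : c δ β = hex.choose := by simp only [hcdef, dif_pos hex]
    rw [hval]
    exact ⟨hex.choose_spec.1.2, hex.choose_spec.2⟩
  -- an injection of `ω₁` into `ℕ → Bool`
  have hcard : Cardinal.mk omega1.ToType ≤ Cardinal.mk (ℕ → Bool) := by
    rw [Cardinal.mk_toType, omega1, Cardinal.card_ord, ← Cardinal.power_def,
      Cardinal.mk_bool, Cardinal.mk_nat, Cardinal.two_power_aleph0]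
    exact Cardinal.aleph_one_le_continuum
  obtain ⟨emb⟩ := (Cardinal.le_def _ _).1 hcard
  set iso := (Ordinal.ToType.mk (o := omega1)) with hisodef
  set f : Ordinal → ℕ → Bool := fun x =>
    if h : x < omega1 then emb (iso ⟨x, h⟩) else fun _ => true with hfdef
  have hfinj : ∀ x y, x < omega1 → y < omega1 → f x = f y → x = y := by
    intro x y hx hy hxy
    simp only [hfdef, dif_pos hx, dif_pos hy] at hxy
    have h1 := iso.injective (emb.injective hxy)
    exact congrArg Subtype.val h1
  -- uniformize each Boolean bit of `f ∘ c`
  have hHn : ∀ n : ℕ, ∃ h : Ordinal → Bool,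
      Uniformizes e T (fun δ β => f (c δ β) n) h := fun n => hu _
  choose H hH using hHn
  -- decode the combined function
  set g : Ordinal → Ordinal := fun β =>
    if h : ∃ α, α < omega1 ∧ f α = fun n => H n β then h.choose else 0 with hgdef
  have hglt : ∀ β, g β < omega1 := by
    intro β
    simp only [hgdef]
    split_ifs with h
    · exact h.choose_spec.1
    · exact omega1_pos'
  -- `g` agrees with `c δ` on a tail of each ladder
  have key : ∀ δ ∈ S21, ∃ Γ < δ, ∀ β ∈ lad e T δ, Γ ≤ β → g β = c δ β := by
    intro δ hδ
    choose γ hγlt hγ using fun n => hH n δ hδ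
    refine ⟨⨆ n, γ n, ?_, ?_⟩
    · apply Ordinal.iSup_lt_ord _ hγlt
      rw [Cardinal.mk_nat, hδ.2]
      exact Cardinal.aleph0_lt_aleph_one
    · intro β hβ hΓβ
      have hfix : (fun n => H n β) = f (c δ β) := by
        funext n
        exact hγ n β hβ ((Ordinal.le_iSup (fun n => γ n) n).trans hΓβ)
      have hex : ∃ α, α < omega1 ∧ f α = fun n => H n β :=
        ⟨c δ β, (hc δ β hβ).1, hfix.symm⟩
      have hval : g β = hex.choose := by simp only [hgdef, dif_pos hex]
      rw [hval]
      exact hfinj _ _ hex.choose_spec.1 (hc δ β hβ).1 (hex.choose_spec.2.trans hfix)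
  -- some fiber of `g` over `S²₀` is stationary in `ω₂`
  have hstat : ∃ α, α < omega1 ∧ stationaryIn {β | β ∈ S20 ∧ g β = α} omega2 := by
    by_contra hcon
    push_neg at hcon
    have hclub : ∀ i : omega1.ToType, ∃ C, clubIn C omega2 ∧
        ({β | β ∈ S20 ∧ g β = ((iso.symm i : ↥(Iio omega1)) : Ordinal)} ∩ C) = ∅ := by
      intro i
      have hval : ((iso.symm i : ↥(Iio omega1)) : Ordinal) < omega1 := (iso.symm i).2
      have hns := hcon _ hval
      simp only [stationaryIn, not_forall] at hns
      obtain ⟨C, hC1, hC2⟩ := hns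
      exact ⟨C, hC1, Set.not_nonempty_iff_eq_empty.1 hC2⟩
    choose D hD1 hD2 using hclub
    obtain ⟨β, hβS, hβD⟩ := stationary_S20 _ (clubIn_iInter' hD1)
    set i := iso ⟨g β, hglt β⟩ with hidef
    have hmem : β ∈ {β | β ∈ S20 ∧ g β = ((iso.symm i : ↥(Iio omega1)) : Ordinal)} := by
      refine ⟨hβS, ?_⟩
      rw [hidef, OrderIso.symm_apply_apply]
    have : β ∈ {β | β ∈ S20 ∧ g β = ((iso.symm i : ↥(Iio omega1)) : Ordinal)} ∩ D i :=
      ⟨hmem, Set.mem_iInter.1 hβD i⟩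
    rw [hD2 i] at this
    exact this
  obtain ⟨α, hα, hSstat⟩ := hstat
  refine ⟨{β | β ∈ S20 ∧ g β = α}, fun β hβ => hβ.1, hSstat, e, he, ?_⟩
  intro δ hδ
  have hδlim := S21_isLimit hδ
  obtain ⟨Γ, hΓδ, hΓ⟩ := key δ hδ
  by_cases hex : ∃ β, β ∈ ({β | β ∈ S20 ∧ g β = α} ∩ lad e T δ) ∧ Γ ≤ β
  · obtain ⟨β₀, hβ₀, hΓβ₀⟩ := hex
    have hβ₀δ : β₀ < δ := by
      obtain ⟨i, hi, hei⟩ := hβ₀.2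
      rw [← hei]
      exact (he.1 δ hδ).2.1 i hi.2
    have hsucc : β₀ + 1 < δ := by
      rw [Ordinal.add_one_eq_succ]; exact hδlim.succ_lt hβ₀δ
    apply not_stationary_of_bounded hδlim (max_lt hΓδ hsucc)
    intro β hβ
    rcases lt_or_ge β Γ with h | h
    · exact h.trans_le (le_max_left _ _)
    · have heq : β = β₀ := by
        have e1 : e δ (c δ β) = β := (hc δ β hβ.2).2
        have e2 : e δ (c δ β₀) = β₀ := (hc δ β₀ hβ₀.2).2
        have hcc : c δ β = c δ β₀ := by
          rw [← hΓ β hβ.2 h, ← hΓ β₀ hβ₀.2 hΓβ₀, hβ.1.2, hβ₀.1.2]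
        rw [← e1, ← e2, hcc]
      rw [heq]
      refine lt_of_lt_of_le ?_ (le_max_right _ _)
      rw [Ordinal.add_one_eq_succ]; exact Order.lt_succ _
  · push_neg at hex
    apply not_stationary_of_bounded hδlim hΓδ
    intro β hβ
    exact hex β hβ
end
end

section
/- Suppose $2^{\omega_1} = \omega_2$, $\diamondsuit(S^2_0)$ holds, and there is a stationary $T \subseteq \omega_1$ such that $\mathrm{Refl}_T(S^2_0)$ holds and the nonstationary ideal $\mathrm{NS}_{\omega_1} \restriction T$ is saturated. Then $\diamondsuit^-(S^2_1)$ holds: there is a sequence $\langle \mathcal{C}_\delta : \delta \in S^2_1 \rangle$ with each $\mathcal{C}_\delta$ a family of at most $\aleph_1$ subsets of $\delta$, such that for every $X \subseteq \omega_2$ there is $\delta \in S^2_1$ with $X \cap \delta \in \mathcal{C}_\delta$. -/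
open Set

noncomputable section

lemma omega1_isLimit : Order.IsSuccLimit omega1 :=
  Cardinal.isSuccLimit_ord (Cardinal.aleph0_le_aleph 1)

lemma ladder_aux (δ : Ordinal.{0}) (hcof : Ordinal.cof δ = Cardinal.aleph 1) :
    ∃ g : Ordinal → Ordinal, StrictMonoOn g (Iio omega1) ∧
      (∀ i < omega1, g i < δ) ∧ (∀ β < δ, ∃ i < omega1, β ≤ g i) ∧
      ∀ i < omega1, Order.IsSuccLimit i → g i = sSup (g '' Iio i) := by
  classical
  obtain ⟨f, hf⟩ := Ordinal.exists_fundamental_sequence δ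
  have hco : δ.cof.ord = omega1 := by rw [hcof]; rfl
  have holim : Order.IsSuccLimit δ.cof.ord := by rw [hco]; exact omega1_isLimit
  rw [← hco]
  set F : Ordinal → Ordinal := fun i => if h : i < δ.cof.ord then f i h else 0 with hF
  have hFmono : ∀ i < δ.cof.ord, ∀ j < δ.cof.ord, i < j → F i < F j := by
    intro i hi j hj hij
    simp only [hF, dif_pos hi, dif_pos hj]
    exact hf.2.1 hi hj hij
  have hFlt : ∀ i < δ.cof.ord, F i < δ := by
    intro i hi
    simp only [hF, dif_pos hi]
    rw [← hf.2.2]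
    exact Ordinal.lt_blsub _ _ _
  have hFcof : ∀ β < δ, ∃ i < δ.cof.ord, β ≤ F i := by
    intro β hβ
    rw [← hf.2.2, Ordinal.lt_blsub_iff] at hβ
    obtain ⟨i, hi, hle⟩ := hβ
    exact ⟨i, hi, by simpa [hF, dif_pos hi] using hle⟩
  set g : Ordinal → Ordinal := fun i => if Order.IsSuccLimit i then sSup (F '' Iio i) else F i with hg
  have hbdd : ∀ i < δ.cof.ord, BddAbove (F '' Iio i) := by
    intro i hi
    exact ⟨F i, by rintro x ⟨j, hj, rfl⟩; exact (hFmono j (hj.trans hi) i hi hj).le⟩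
  have hgleF : ∀ i < δ.cof.ord, g i ≤ F i := by
    intro i hi
    by_cases h : Order.IsSuccLimit i
    · simp only [hg, if_pos h]
      refine csSup_le ⟨F 0, 0, h.pos, rfl⟩ ?_
      rintro x ⟨j, hj, rfl⟩
      exact (hFmono j (hj.trans hi) i hi hj).le
    · simp [hg, if_neg h]
  have hFltg : ∀ j i, j < i → i < δ.cof.ord → F j < g i := by
    intro j i hji hi
    by_cases h : Order.IsSuccLimit i
    · simp only [hg, if_pos h]
      have h1 : F j < F (j+1) := hFmono j (hji.trans hi) (j+1) ((h.succ_lt hji).trans hi) (lt_add_one j)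
      exact h1.trans_le (le_csSup (hbdd i hi) ⟨j+1, h.succ_lt hji, rfl⟩)
    · simpa [hg, if_neg h] using hFmono j (hji.trans hi) i hi hji
  have hgmono : StrictMonoOn g (Iio δ.cof.ord) := by
    intro i hi j hj hij
    exact (hgleF i hi).trans_lt (hFltg i j hij hj)
  refine ⟨g, hgmono, ?_, ?_, ?_⟩
  · intro i hi; exact (hgleF i hi).trans_lt (hFlt i hi)
  · intro β hβ
    obtain ⟨i, hi, hle⟩ := hFcof β hβ
    refine ⟨i+1, holim.succ_lt hi, hle.trans (hFltg i (i+1) (lt_add_one i)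
      (holim.succ_lt hi)).le⟩
  · intro i hi hlim
    simp only [hg, if_pos hlim]
    have hne : (Iio i).Nonempty := ⟨0, hlim.pos⟩
    have hbddg : BddAbove ((fun k => if Order.IsSuccLimit k then sSup (F '' Iio k) else F k) '' Iio i) := by
      refine ⟨F i, ?_⟩
      rintro x ⟨j, hj, rfl⟩
      exact (hgleF j (hj.trans hi)).trans (hFmono j (hj.trans hi) i hi hj).le
    apply le_antisymm
    · refine csSup_le (hne.image F) ?_
      rintro x ⟨j, hj, rfl⟩
      have h1 : F j < g (j+1) := hFltg j (j+1) (lt_add_one j) ((hlim.succ_lt hj).trans hi)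
      exact h1.le.trans (le_csSup hbddg ⟨j+1, hlim.succ_lt hj, rfl⟩)
    · refine csSup_le (hne.image _) ?_
      rintro x ⟨j, hj, rfl⟩
      exact (hgleF j (hj.trans hi)).trans (le_csSup (hbdd i hi) ⟨j, hj, rfl⟩)

lemma exists_clubLadderEnum : ∃ e : Ordinal → Ordinal → Ordinal, IsClubLadderEnum e := by
  have H : ∀ δ : Ordinal.{0}, ∃ g : Ordinal → Ordinal, δ ∈ S21 →
      StrictMonoOn g (Iio omega1) ∧ (∀ i < omega1, g i < δ) ∧
      (∀ β < δ, ∃ i < omega1, β ≤ g i) ∧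
      ∀ i < omega1, Order.IsSuccLimit i → g i = sSup (g '' Iio i) := by
    intro δ
    by_cases h : δ ∈ S21
    · obtain ⟨g, hg⟩ := ladder_aux δ h.2
      exact ⟨g, fun _ => hg⟩
    · exact ⟨fun _ => 0, fun hδ => absurd hδ h⟩
  choose e he using H
  refine ⟨e, ⟨fun δ hδ => ⟨(he δ hδ).1, (he δ hδ).2.1, (he δ hδ).2.2.1⟩,
    fun δ hδ => (he δ hδ).2.2.2⟩⟩

/-- The set of ordinals in `[β, ω₁)` is club in `ω₁`. -/
lemma club_Ici (β : Ordinal) (hβ : β < omega1) : clubIn (Ici β ∩ Iio omega1) omega1 := by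
  constructor
  · intro x hx hx0 hlim
    obtain ⟨ξ, ⟨hξβ, _⟩, _, hξx⟩ := hlim 0 (pos_iff_ne_zero.2 hx0)
    exact ⟨hξβ.trans hξx.le, hx⟩
  · refine ⟨inter_subset_right, fun x hx => ?_⟩
    rcases le_total x β with h | h
    · exact ⟨β, ⟨le_refl β, hβ⟩, h⟩
    · exact ⟨x, ⟨h, hx⟩, le_refl x⟩

lemma stationary_unbounded {S : Set Ordinal} (hS : stationaryIn S omega1) :
    ∀ β < omega1, ∃ γ ∈ S, β ≤ γ := by
  intro β hβ
  obtain ⟨γ, hγS, hγβ, _⟩ := hS _ (club_Ici β hβ)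
  exact ⟨γ, hγS, hγβ⟩

lemma image_club {e : Ordinal → Ordinal → Ordinal} (he : IsClubLadderEnum e)
    {δ : Ordinal} (hδ : δ ∈ S21) {D : Set Ordinal} (hD : clubIn D omega1) :
    clubIn (e δ '' D) δ := by
  obtain ⟨hmono, hlt, hcof⟩ := he.1 δ hδ
  have hcont := he.2 δ hδ
  have hDsub : D ⊆ Iio omega1 := hD.2.1
  constructor
  · -- closed
    intro β hβδ hβ0 hlim
    set Sset : Set Ordinal := {ξ | ξ < omega1 ∧ β ≤ e δ ξ} with hSset
    have hSne : Sset.Nonempty := by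
      obtain ⟨i, hi, hle⟩ := hcof β hβδ
      exact ⟨i, hi, hle⟩
    set ξ₀ := sInf Sset with hξ₀def
    have hξ₀ : ξ₀ ∈ Sset := csInf_mem hSne
    have haux : ∀ ζ < ξ₀, e δ ζ < β := by
      intro ζ hζ
      by_contra h
      push_neg at h
      exact absurd (csInf_le (OrderBot.bddBelow _) (show ζ ∈ Sset from ⟨hζ.trans hξ₀.1, h⟩)) (not_le.2 hζ)
    have hltξ₀ : ∀ ξ, ξ ∈ D → e δ ξ < β → ξ < ξ₀ := by
      intro ξ hξD hlt'
      by_contra h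
      push_neg at h
      have : e δ ξ₀ ≤ e δ ξ := by
        rcases eq_or_lt_of_le h with rfl | h'
        · exact le_refl _
        · exact (hmono hξ₀.1 (hDsub hξD) h').le
      exact absurd (hξ₀.2.trans this) (not_le.2 hlt')
    have hlow : ∀ ζ < ξ₀, ∃ ξ ∈ D, ζ < ξ ∧ ξ < ξ₀ := by
      intro ζ hζ
      obtain ⟨x, ⟨ξ, hξD, rfl⟩, hgt, hltβ⟩ := hlim (e δ ζ) (haux ζ hζ)
      have hζξ : ζ < ξ := by
        by_contra h
        push_neg at h
        have : e δ ξ ≤ e δ ζ := by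
          rcases eq_or_lt_of_le h with rfl | h'
          · exact le_refl _
          · exact (hmono (hDsub hξD) (hζ.trans hξ₀.1) h').le
        exact absurd (lt_of_lt_of_le hgt this) (lt_irrefl _)
      exact ⟨ξ, hξD, hζξ, hltξ₀ ξ hξD hltβ⟩
    have hξ₀0 : ξ₀ ≠ 0 := by
      obtain ⟨x, ⟨ξ, hξD, rfl⟩, hgt, hltβ⟩ := hlim 0 (pos_iff_ne_zero.2 hβ0)
      exact fun h => absurd (hltξ₀ ξ hξD hltβ) (by simp [h])
    have hξ₀lim : Order.IsSuccLimit ξ₀ := by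
      refine Ordinal.isSuccLimit_iff.2 ⟨?_, Order.isSuccPrelimit_iff_succ_lt.2 ?_⟩
      · exact hξ₀0
      · intro a ha
        obtain ⟨ξ, _, hgt, hlt'⟩ := hlow a ha
        exact lt_of_le_of_lt (Order.succ_le_of_lt hgt) hlt'
    have hξ₀D : ξ₀ ∈ D := hD.1 ξ₀ hξ₀.1 hξ₀0 hlow
    have : e δ ξ₀ = β := by
      have h1 : e δ ξ₀ = sSup (e δ '' Iio ξ₀) := hcont ξ₀ hξ₀.1 hξ₀lim
      have h2 : sSup (e δ '' Iio ξ₀) ≤ β := by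
        refine csSup_le ⟨e δ 0, 0, hξ₀lim.pos, rfl⟩ ?_
        rintro x ⟨ζ, hζ, rfl⟩
        exact (haux ζ hζ).le
      exact le_antisymm (h1 ▸ h2) hξ₀.2
    exact ⟨ξ₀, hξ₀D, this⟩
  · -- unbounded
    constructor
    · rintro x ⟨ξ, hξD, rfl⟩
      exact hlt ξ (hDsub hξD)
    · intro β hβ
      obtain ⟨i, hi, hle⟩ := hcof β hβ
      obtain ⟨ξ, hξD, hiξ⟩ := hD.2.2 i hi
      have : e δ i ≤ e δ ξ := by
        rcases eq_or_lt_of_le hiξ with rfl | h'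
        · exact le_refl _
        · exact (hmono hi (hDsub hξD) h').le
      exact ⟨e δ ξ, ⟨ξ, hξD, rfl⟩, hle.trans this⟩

lemma preimage_stationary {e : Ordinal → Ordinal → Ordinal} (he : IsClubLadderEnum e)
    {δ : Ordinal} (hδ : δ ∈ S21) {T S : Set Ordinal} (hT : T ⊆ Iio omega1)
    (hstat : stationaryIn (S ∩ lad e T δ) δ) :
    stationaryIn {ξ | ξ ∈ T ∧ e δ ξ ∈ S} omega1 := by
  intro D hD
  obtain ⟨x, ⟨hxS, hxlad⟩, hxim⟩ := hstat _ (image_club he hδ hD)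
  obtain ⟨ζ, hζD, hζe⟩ := hxim
  obtain ⟨ξ, ⟨hξT, hξlt⟩, hξe⟩ := hxlad
  have hζξ : ζ = ξ := (he.1 δ hδ).1.injOn (hD.2.1 hζD) hξlt (by rw [hζe, hξe])
  exact ⟨ξ, ⟨hξT, hξe ▸ hxS⟩, hζξ ▸ hζD⟩

/-- Shelah: If `2^{ω₁} = ω₂`, `◇(S²₀)` holds, and there is a stationary
`T ⊆ ω₁` with `Refl_T(S²₀)` such that `NS_{ω₁} ↾ T` is saturated, then `◇⁻(S²₁)` holds. -/
theorem refl_saturated_implies_diamond_minus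
    (hpow : (2 : Cardinal) ^ Cardinal.aleph 1 = Cardinal.aleph 2)
    (hdia : DiamondP S20 omega2)
    (T : Set Ordinal) (hT : T ⊆ Iio omega1) (hTstat : stationaryIn T omega1)
    (hrefl : ReflPattern T) (hsat : SaturatedOn T) :
    ∃ C : Ordinal → Set (Set Ordinal),
      (∀ δ ∈ S21, Cardinal.mk ↥(C δ) ≤ Cardinal.aleph 1 ∧ ∀ X ∈ C δ, X ⊆ Iio δ) ∧
      ∀ X : Set Ordinal, ∃ δ ∈ S21, X ∩ Iio δ ∈ C δ := by
  clear hpow hTstat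
  obtain ⟨A, hA⟩ := hdia
  obtain ⟨e, he⟩ := exists_clubLadderEnum
  set Coh : Ordinal → Set Ordinal → Prop := fun δ T' =>
    T' ⊆ T ∧ stationaryIn T' omega1 ∧
    (∀ ξ ∈ T', e δ ξ ∈ S20) ∧
    (∀ ξ ∈ T', ∀ ξ' ∈ T', ξ ≤ ξ' → A (e δ ξ) = A (e δ ξ') ∩ Iio (e δ ξ)) with hCoh
  have hzorn : ∀ δ : Ordinal, ∃ 𝒯 : Set (Set Ordinal),
      Maximal (fun 𝒯 => (∀ T' ∈ 𝒯, Coh δ T') ∧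
        ∀ S ∈ 𝒯, ∀ S' ∈ 𝒯, S ≠ S' → ¬ stationaryIn (S ∩ S') omega1) 𝒯 := by
    intro δ
    apply zorn_subset
    intro c hc hchain
    refine ⟨⋃₀ c, ⟨?_, ?_⟩, fun s hs => subset_sUnion_of_mem hs⟩
    · rintro T' ⟨s, hs, hT's⟩
      exact (hc hs).1 T' hT's
    · rintro S ⟨s, hs, hSs⟩ S' ⟨s', hs', hS's'⟩ hne
      rcases hchain.total hs hs' with h | h
      · exact (hc hs').2 S (h hSs) S' hS's' hne
      · exact (hc hs).2 S hSs S' (h hS's') hne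
  choose 𝒯 h𝒯 using hzorn
  refine ⟨fun δ => (fun T' => ⋃ ξ ∈ T', A (e δ ξ)) '' 𝒯 δ, ?_, ?_⟩
  · intro δ hδ
    constructor
    · refine le_trans Cardinal.mk_image_le (hsat (𝒯 δ) ?_ ?_)
      · intro S hS
        exact ⟨((h𝒯 δ).1.1 S hS).1, ((h𝒯 δ).1.1 S hS).2.1⟩
      · exact (h𝒯 δ).1.2
    · rintro X ⟨T', hT', rfl⟩ β hβ
      simp only [mem_iUnion] at hβ
      obtain ⟨ξ, hξ, hβA⟩ := hβ
      have hcoh := (h𝒯 δ).1.1 T' hT'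
      have hξω : ξ < omega1 := hT (hcoh.1 hξ)
      have h1 : A (e δ ξ) ⊆ Iio (e δ ξ) := hA.1 _ (hcoh.2.2.1 ξ hξ)
      exact lt_trans (h1 hβA) ((he.1 δ hδ).2.1 ξ hξω)
  · intro X
    set SX : Set Ordinal := {α | α ∈ S20 ∧ X ∩ Iio α = A α} with hSX
    have hSXstat : stationaryIn SX omega2 := hA.2 X
    obtain ⟨δ, hδ, hstat⟩ := hrefl e he SX (fun α hα => hα.1) hSXstat
    refine ⟨δ, hδ, ?_⟩
    set T'' : Set Ordinal := {ξ | ξ ∈ T ∧ e δ ξ ∈ SX} with hT''def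
    have hT''stat : stationaryIn T'' omega1 := preimage_stationary he hδ hT hstat
    have hmono := (he.1 δ hδ).1
    have hmle : ∀ ξ ξ' : Ordinal, ξ < omega1 → ξ' < omega1 → ξ ≤ ξ' → e δ ξ ≤ e δ ξ' := by
      intro ξ ξ' h1 h2 hle
      rcases eq_or_lt_of_le hle with rfl | h
      · exact le_refl _
      · exact (hmono h1 h2 h).le
    have hT''coh : Coh δ T'' := by
      refine ⟨fun ξ hξ => hξ.1, hT''stat, fun ξ hξ => hξ.2.1, ?_⟩
      intro ξ hξ ξ' hξ' hle
      have hee : e δ ξ ≤ e δ ξ' := hmle ξ ξ' (hT hξ.1) (hT hξ'.1) hle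
      rw [← hξ.2.2, ← hξ'.2.2]
      ext β
      constructor
      · rintro ⟨hβX, hβ⟩
        exact ⟨⟨hβX, hβ.trans_le hee⟩, hβ⟩
      · rintro ⟨⟨hβX, _⟩, hβ⟩
        exact ⟨hβX, hβ⟩
    obtain ⟨T', hT'mem, hT'stat⟩ : ∃ T' ∈ 𝒯 δ, stationaryIn (T' ∩ T'') omega1 := by
      by_contra h
      push_neg at h
      have hnotmem : T'' ∉ 𝒯 δ := by
        intro hmem
        have h2 := h T'' hmem
        rw [inter_self] at h2
        exact h2 hT''stat
      have hP : (∀ S ∈ insert T'' (𝒯 δ), Coh δ S) ∧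
          ∀ S ∈ insert T'' (𝒯 δ), ∀ S' ∈ insert T'' (𝒯 δ), S ≠ S' →
            ¬ stationaryIn (S ∩ S') omega1 := by
        constructor
        · rintro S (rfl | hS)
          · exact hT''coh
          · exact (h𝒯 δ).1.1 S hS
        · rintro S (rfl | hS) S' (rfl | hS') hne
          · exact absurd rfl hne
          · rw [inter_comm]
            exact h S' hS'
          · exact h S hS
          · exact (h𝒯 δ).1.2 S hS S' hS' hne
      have hsub := (h𝒯 δ).2 hP (subset_insert _ _)
      exact hnotmem (hsub (mem_insert _ _))
    have hcohT' := (h𝒯 δ).1.1 T' hT'mem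
    have hpt : ∀ ξ ∈ T', A (e δ ξ) = X ∩ Iio (e δ ξ) := by
      intro ξ hξ
      have hξω : ξ < omega1 := hT (hcohT'.1 hξ)
      obtain ⟨ξ'', h'', hge⟩ := stationary_unbounded hT'stat ξ hξω
      have hξ''ω : ξ'' < omega1 := hT (hcohT'.1 h''.1)
      have hcohuse := hcohT'.2.2.2 ξ hξ ξ'' h''.1 hge
      have hX : X ∩ Iio (e δ ξ'') = A (e δ ξ'') := h''.2.2.2
      have hee : e δ ξ ≤ e δ ξ'' := hmle ξ ξ'' hξω hξ''ω hge
      rw [hcohuse, ← hX]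
      ext β
      constructor
      · rintro ⟨⟨hβX, _⟩, hβ⟩
        exact ⟨hβX, hβ⟩
      · rintro ⟨hβX, hβ⟩
        exact ⟨⟨hβX, hβ.trans_le hee⟩, hβ⟩
    refine ⟨T', hT'mem, ?_⟩
    ext β
    simp only [mem_iUnion]
    constructor
    · rintro ⟨ξ, hξ, hβA⟩
      rw [hpt ξ hξ] at hβA
      have hξω : ξ < omega1 := hT (hcohT'.1 hξ)
      exact ⟨hβA.1, lt_trans hβA.2 ((he.1 δ hδ).2.1 ξ hξω)⟩
    · rintro ⟨hβX, hβδ⟩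
      obtain ⟨i, hi, hle⟩ := (he.1 δ hδ).2.2 β hβδ
      have hsi : i + 1 < omega1 := omega1_isLimit.succ_lt hi
      obtain ⟨ξ, hξT', hige⟩ := stationary_unbounded hcohT'.2.1 (i + 1) hsi
      have hξω : ξ < omega1 := hT (hcohT'.1 hξT')
      have hiξ : i < ξ := lt_of_lt_of_le (lt_add_one i) hige
      have : β < e δ ξ := lt_of_le_of_lt hle (hmono hi hξω hiξ)
      exact ⟨ξ, hξT', by rw [hpt ξ hξT']; exact ⟨hβX, this⟩⟩
end
end
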